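/- The maximum distance between a point of the unit trapezoid and a point of its mirror image across the line containing one of its legs equals 2√3. -/

import Mathlib

/-!
A distance between points of two convex polygons is maximised at a pair of vertices, so it
suffices to compare the sixteen vertex pairs: all squared distances are at most `12`, with
equality for `(0,0)` and its mirror image `(3,√3)`.
-/

open Real

noncomputable def pt (x y : ℝ) : EuclideanSpace ℝ (Fin 2) := WithLp.toLp 2 ![x, y]

noncomputable def unitTrapezoid : Set (EuclideanSpace ℝ (Fin 2)) :=
  convexHull ℝ {pt 0 0, pt 2 0, pt (3/2) (sqrt 3 / 2), pt (1/2) (sqrt 3 / 2)}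

/-- The reflection of the unit trapezoid across the line containing the leg through
`(2,0)` and `(3/2, √3/2)`: the vertices `(0,0)`, `(2,0)`, `(3/2,√3/2)`, `(1/2,√3/2)`
map to `(3,√3)`, `(2,0)`, `(3/2,√3/2)`, `(2,√3)` respectively. -/
noncomputable def unitTrapezoidLegRefl : Set (EuclideanSpace ℝ (Fin 2)) :=
  convexHull ℝ {pt 3 (sqrt 3), pt 2 0, pt (3/2) (sqrt 3 / 2), pt 2 (sqrt 3)}

theorem dist_le_of_mem_convexHull {E : Type*} [SeminormedAddCommGroup E] [NormedSpace ℝ E]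
    {s t : Set E} {r : ℝ} (h : ∀ x ∈ s, ∀ y ∈ t, dist x y ≤ r) {x y : E}
    (hx : x ∈ convexHull ℝ s) (hy : y ∈ convexHull ℝ t) : dist x y ≤ r := by
  obtain ⟨x', hx', y', hy', hxy⟩ := convexHull_exists_dist_ge2 hx hy
  exact hxy.trans (h x' hx' y' hy')

theorem dist_pt (a b c d : ℝ) : dist (pt a b) (pt c d) = √((a - c) ^ 2 + (b - d) ^ 2) := by
  rw [EuclideanSpace.dist_eq]
  simp [pt, Fin.sum_univ_two, Real.dist_eq, sq_abs]

theorem two_mul_sqrt_three_eq_sqrt_twelve : 2 * √3 = √12 := by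
  rw [show (12 : ℝ) = 2 ^ 2 * 3 by norm_num, sqrt_mul (by norm_num), sqrt_sq zero_le_two]

theorem dist_pt_le_two_mul_sqrt_three {a b c d : ℝ} (h : (a - c) ^ 2 + (b - d) ^ 2 ≤ 12) :
    dist (pt a b) (pt c d) ≤ 2 * √3 := by
  rw [dist_pt, two_mul_sqrt_three_eq_sqrt_twelve]
  exact sqrt_le_sqrt h

theorem dist_vertices_le :
    ∀ x ∈ ({pt 0 0, pt 2 0, pt (3/2) (√3 / 2), pt (1/2) (√3 / 2)} : Set _),
      ∀ y ∈ ({pt 3 √3, pt 2 0, pt (3/2) (√3 / 2), pt 2 √3} : Set _), dist x y ≤ 2 * √3 := by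
  have h3 : √3 ^ 2 = 3 := sq_sqrt (by norm_num)
  have h3_nonneg : 0 ≤ √3 := sqrt_nonneg 3
  simp only [Set.mem_insert_iff, Set.mem_singleton_iff]
  rintro x (rfl | rfl | rfl | rfl) y (rfl | rfl | rfl | rfl) <;>
    apply dist_pt_le_two_mul_sqrt_three <;> nlinarith

theorem max_dist_trapezoid_leg_refl :
    IsGreatest {d : ℝ | ∃ x ∈ unitTrapezoid, ∃ y ∈ unitTrapezoidLegRefl, d = dist x y}
      (2 * sqrt 3) := by
  refine ⟨⟨pt 0 0, subset_convexHull ℝ _ (by simp), pt 3 √3, subset_convexHull ℝ _ (by simp), ?_⟩,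
    ?_⟩
  · have h : ((0 : ℝ) - 3) ^ 2 + (0 - √3) ^ 2 = 12 := by
      nlinarith [sq_sqrt (show (0 : ℝ) ≤ 3 by norm_num)]
    rw [dist_pt, h, two_mul_sqrt_three_eq_sqrt_twelve]
  · rintro d ⟨x, hx, y, hy, rfl⟩
    exact dist_le_of_mem_convexHull dist_vertices_le hx hy
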